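/- arXiv:1812.05251 — 2 statements merged into one kernel-verified Lean document; each statement's English description precedes it below -/
import Mathlib

section
/- (Continuous-time logarithm law via thickening; conditional form of Theorem 4.10(3).) Let (B_t)_{t ≥ 1} be a nested family of measurable subsets of X (B_t ⊆ B_s for s ≤ t), and for each t let B̃_t = ⋃_{s ∈ [−1/2,1/2]} φ_s(B_t) be its thickening; assume each B̃_t is measurable with m(B̃_t) > 0 and m(B̃_t) → 0 as t → ∞. Suppose there is a constant C > 0 such that for every t ≥ 1 and every integer N ≥ 1, m({x ∈ X : φ_k x ∉ B̃_t for all integers 1 ≤ k ≤ N}) ≤ C (1 + |log m(B̃_t)|)/(N · m(B̃_t)). Define τ_{B_t}(x) = inf{s ∈ ℝ : s ≥ 1/2 and φ_s x ∈ B_t} (= ∞ if empty). Then for m-almost every x ∈ X there is t₀(x) such that τ_{B_t}(x) < ∞ for all t ≥ t₀, and lim_{t→∞} log τ_{B_t}(x) / (−log m(B̃_t)) = 1. -/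
open MeasureTheory Filter Set
open scoped Topology ENNReal NNReal

/-- Every subset of `ℝ` which is bounded above admits a countable "cofinal" monotone
sequence (with a fallback value `c` used when the set is empty). -/
lemma cofinal_seq_aux (S : Set ℝ) (c : ℝ) (hbdd : BddAbove S) :
    ∃ w : ℕ → ℝ, Monotone w ∧ (∀ j, w j ∈ S ∪ {c}) ∧ ∀ t ∈ S, ∃ j, t ≤ w j := by
  rcases S.eq_empty_or_nonempty with h | hne
  · subst h
    exact ⟨fun _ => c, monotone_const, fun _ => Or.inr rfl, by simp⟩
  by_cases hmem : sSup S ∈ S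
  · exact ⟨fun _ => sSup S, monotone_const, fun _ => Or.inl hmem,
      fun t ht => ⟨0, le_csSup hbdd ht⟩⟩
  obtain ⟨u, hum, hut, humem⟩ := exists_seq_tendsto_sSup hne hbdd
  refine ⟨u, hum, fun j => Or.inl (humem j), fun t ht => ?_⟩
  have h1 : t < sSup S := lt_of_le_of_ne (le_csSup hbdd ht) fun h => hmem (h ▸ ht)
  obtain ⟨j, hj⟩ := (hut.eventually (eventually_gt_nhds h1)).exists
  exact ⟨j, hj.le⟩

/-- Every nonempty subset of `ℝ` which is bounded below admits a countable "coinitial"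
antitone sequence. -/
lemma coinitial_seq_aux (S : Set ℝ) (hne : S.Nonempty) (hbdd : BddBelow S) :
    ∃ w : ℕ → ℝ, Antitone w ∧ (∀ j, w j ∈ S) ∧ ∀ t ∈ S, ∃ j, w j ≤ t := by
  by_cases hmem : sInf S ∈ S
  · exact ⟨fun _ => sInf S, antitone_const, fun _ => hmem,
      fun t ht => ⟨0, csInf_le hbdd ht⟩⟩
  obtain ⟨u, hum, hut, humem⟩ := exists_seq_tendsto_sInf hne hbdd
  refine ⟨u, hum, humem, fun t ht => ?_⟩
  have h1 : sInf S < t := lt_of_le_of_ne (csInf_le hbdd ht) fun h => hmem (h ▸ ht)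
  obtain ⟨j, hj⟩ := (hut.eventually (eventually_lt_nhds h1)).exists
  exact ⟨j, hj.le⟩

lemma pow_cube_le_real_aux (n : ℕ) (hn : 13 ≤ n) : 2 * ((n : ℝ) + 1) ^ 3 ≤ (2 : ℝ) ^ n := by
  induction n, hn using Nat.le_induction with
  | base => norm_num
  | succ n hn ih =>
    have hn' : (13 : ℝ) ≤ (n : ℝ) := by exact_mod_cast hn
    have hcube : 13 * (n:ℝ)^2 ≤ (n:ℝ)^3 := by nlinarith
    have h1 : 2 * (((n : ℝ) + 1) + 1) ^ 3 ≤ 2 * (2 * ((n : ℝ) + 1) ^ 3) := by nlinarith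
    calc 2 * (((n : ℕ) + 1 : ℕ) + 1 : ℝ) ^ 3 = 2 * (((n : ℝ) + 1) + 1) ^ 3 := by push_cast; ring
      _ ≤ 2 * (2 * ((n : ℝ) + 1) ^ 3) := h1
      _ ≤ 2 * (2 : ℝ) ^ n := by linarith
      _ = (2 : ℝ) ^ (n + 1) := by rw [pow_succ]; ring

set_option maxHeartbeats 1000000 in
/-- (Continuous-time logarithm law via thickening; conditional
form of Theorem 4.10(3).) Let `(φ_t)` be a jointly measurable measure-preserving
flow on a probability space `(X, m)`, and `(B_t)_{t ≥ 1}` a nested family of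
measurable subsets with measurable thickenings `B̃_t = ⋃_{|s| ≤ 1/2} φ_s(B_t)`
satisfying `m(B̃_t) > 0` and `m(B̃_t) → 0`. Suppose the exceptional-set bound
`m({x : φ_k x ∉ B̃_t, 1 ≤ k ≤ N}) ≤ C (1 + |log m(B̃_t)|)/(N m(B̃_t))` holds for
all `t ≥ 1`, `N ≥ 1`. Define `τ_{B_t}(x) = inf{s ≥ 1/2 : φ_s x ∈ B_t}`. Then for
`m`-a.e. `x` there is `t₀(x)` such that `τ_{B_t}(x) < ∞` (the hitting set is
nonempty) for all `t ≥ t₀`, and `lim_{t→∞} log τ_{B_t}(x)/(−log m(B̃_t)) = 1`. -/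
theorem continuous_time_logarithm_law
    {X : Type*} [MeasurableSpace X] (m : Measure X) [IsProbabilityMeasure m]
    (φ : ℝ → X → X)
    (hφ0 : φ 0 = id)
    (hφadd : ∀ s t : ℝ, φ (s + t) = φ s ∘ φ t)
    (hφmeas : Measurable fun p : ℝ × X => φ p.1 p.2)
    (hφpres : ∀ t : ℝ, MeasurePreserving (φ t) m m)
    (B : ℝ → Set X)
    (hBmeas : ∀ t : ℝ, 1 ≤ t → MeasurableSet (B t))
    (hnested : ∀ s t : ℝ, 1 ≤ s → s ≤ t → B t ⊆ B s)
    (htildemeas : ∀ t : ℝ, 1 ≤ t →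
      MeasurableSet (⋃ s ∈ Icc (-(1:ℝ)/2) (1/2), φ s '' B t))
    (htildepos : ∀ t : ℝ, 1 ≤ t → 0 < m (⋃ s ∈ Icc (-(1:ℝ)/2) (1/2), φ s '' B t))
    (htildeto0 : Tendsto (fun t => m (⋃ s ∈ Icc (-(1:ℝ)/2) (1/2), φ s '' B t))
      atTop (nhds 0))
    (C : ℝ) (hC : 0 < C)
    (hCo : ∀ t : ℝ, 1 ≤ t → ∀ N : ℕ, 1 ≤ N →
      (m {x | ∀ k : ℕ, 1 ≤ k → k ≤ N →
          φ (k : ℝ) x ∉ ⋃ s ∈ Icc (-(1:ℝ)/2) (1/2), φ s '' B t}).toReal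
        ≤ C * (1 + |Real.log (m (⋃ s ∈ Icc (-(1:ℝ)/2) (1/2), φ s '' B t)).toReal|)
            / ((N : ℝ) * (m (⋃ s ∈ Icc (-(1:ℝ)/2) (1/2), φ s '' B t)).toReal)) :
    ∀ᵐ x ∂m, ∃ t₀ : ℝ,
      (∀ t : ℝ, t₀ ≤ t → {s : ℝ | 1 / 2 ≤ s ∧ φ s x ∈ B t}.Nonempty) ∧
      Tendsto (fun t : ℝ =>
          Real.log (sInf {s : ℝ | 1 / 2 ≤ s ∧ φ s x ∈ B t})
            / (-Real.log (m (⋃ s ∈ Icc (-(1:ℝ)/2) (1/2), φ s '' B t)).toReal))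
        atTop (nhds 1) := by
  classical
  set T : ℝ → Set X := fun t => ⋃ s ∈ Icc (-(1:ℝ)/2) (1/2), φ s '' B t with hTdef
  set v : ℝ → ℝ := fun t => (m (T t)).toReal with hvdef
  have hfold : ∀ t : ℝ, (m (⋃ s ∈ Icc (-(1:ℝ)/2) (1/2), φ s '' B t)).toReal = v t :=
    fun _ => rfl
  have hmeas' : ∀ t : ℝ, 1 ≤ t → MeasurableSet (T t) := htildemeas
  have hpos' : ∀ t : ℝ, 1 ≤ t → 0 < m (T t) := htildepos
  have hto0' : Tendsto (fun t => m (T t)) atTop (𝓝 0) := htildeto0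
  have hCo' : ∀ t : ℝ, 1 ≤ t → ∀ N : ℕ, 1 ≤ N →
      (m {x | ∀ k : ℕ, 1 ≤ k → k ≤ N → φ (k : ℝ) x ∉ T t}).toReal
        ≤ C * (1 + |Real.log (v t)|) / ((N : ℝ) * v t) := hCo
  -- basic flow facts
  have hflow : ∀ (a b : ℝ) (x : X), φ (a + b) x = φ a (φ b x) := by
    intro a b x; rw [hφadd]; rfl
  have hinv : ∀ (r : ℝ) (x : X), φ (-r) (φ r x) = x := by
    intro r x
    rw [← hflow, neg_add_cancel, hφ0]; rfl
  have hTanti : ∀ {s t : ℝ}, 1 ≤ s → s ≤ t → T t ⊆ T s := by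
    intro s t hs hst
    simp only [hTdef]
    exact iUnion₂_mono fun r _ => image_mono (hnested s t hs hst)
  have hTne : ∀ t : ℝ, m (T t) ≠ ∞ := fun t => measure_ne_top m _
  have hvpos : ∀ t : ℝ, 1 ≤ t → 0 < v t := fun t ht =>
    ENNReal.toReal_pos (hpos' t ht).ne' (hTne t)
  have hv0 : Tendsto v atTop (𝓝 0) := by
    have h := (ENNReal.tendsto_toReal (a := 0) (by simp)).comp hto0'
    rw [ENNReal.toReal_zero] at h
    exact h
  have hvle1 : ∀ t : ℝ, v t ≤ 1 := by
    intro t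
    have h := ENNReal.toReal_mono ENNReal.one_ne_top (prob_le_one (μ := m) (s := T t))
    simpa using h
  have hl2 : (0:ℝ) < Real.log 2 := Real.log_pos one_lt_two
  -- hitting-time conversions
  have hitup : ∀ (t : ℝ), 1 ≤ t → ∀ (x : X) (k : ℕ), 1 ≤ k → φ (k : ℝ) x ∈ T t →
      ∃ s : ℝ, 1 / 2 ≤ s ∧ s ≤ (k : ℝ) + 1/2 ∧ φ s x ∈ B t := by
    intro t ht x k hk hmem
    simp only [hTdef, mem_iUnion, mem_image, exists_prop] at hmem
    obtain ⟨r, hr, y, hy, hxy⟩ := hmem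
    have hk1 : (1:ℝ) ≤ (k:ℝ) := by exact_mod_cast hk
    refine ⟨(k : ℝ) - r, by linarith [hr.2], by linarith [hr.1], ?_⟩
    have h1 : φ ((k:ℝ) - r) x = φ (-r) (φ (k:ℝ) x) := by
      rw [← hflow]; ring_nf
    rw [h1, ← hxy, hinv]
    exact hy
  have hitdown : ∀ (t : ℝ), 1 ≤ t → ∀ (x : X) (s : ℝ), 1 / 2 ≤ s → φ s x ∈ B t →
      ∃ k : ℕ, 1 ≤ k ∧ (k : ℝ) ≤ s + 1/2 ∧ s - 1/2 ≤ (k:ℝ) ∧ φ (k : ℝ) x ∈ T t := by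
    intro t ht x s hs hmem
    have hfl1 : ((⌊s + 1/2⌋₊ : ℕ) : ℝ) ≤ s + 1/2 := Nat.floor_le (by linarith)
    have hfl2 : s + 1/2 < (⌊s + 1/2⌋₊ : ℕ) + 1 := Nat.lt_floor_add_one _
    refine ⟨⌊s + 1/2⌋₊, Nat.le_floor (by norm_num; linarith), hfl1, by linarith, ?_⟩
    have h1 : φ ((⌊s + 1/2⌋₊ : ℝ)) x = φ ((⌊s + 1/2⌋₊ : ℝ) - s) (φ s x) := by
      rw [← hflow]; ring_nf
    simp only [hTdef, mem_iUnion, mem_image, exists_prop]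
    refine ⟨(⌊s + 1/2⌋₊ : ℝ) - s, ⟨by linarith, by linarith⟩, φ s x, hmem, h1.symm⟩
  -- the integer-time events
  set NN : ℕ → ℕ := fun n => (n + 1) ^ 3 * 2 ^ (n + 1) with hNN
  set KK : ℕ → ℕ := fun n => 2 ^ n / (n + 1) ^ 3 with hKK
  have hNpos : ∀ n, 1 ≤ NN n := by
    intro n
    simp only [hNN]
    exact Nat.one_le_iff_ne_zero.mpr (by positivity)
  set E : ℕ → ℝ → Set X :=
    fun n t => {x | ∀ k : ℕ, 1 ≤ k → k ≤ NN n → φ (k : ℝ) x ∉ T t} with hE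
  set H : ℕ → ℝ → Set X :=
    fun n t => ⋃ k ∈ Finset.Icc 1 (KK n), φ (k : ℝ) ⁻¹' T t with hH
  set Lup : ℕ → Set ℝ := fun n => {t : ℝ | 1 ≤ t ∧ ((2:ℝ) ^ (n+1))⁻¹ ≤ v t} with hLup
  set Llo : ℕ → Set ℝ := fun n => {t : ℝ | 1 ≤ t ∧ v t ≤ ((2:ℝ) ^ n)⁻¹} with hLlo
  have hEmono : ∀ (n : ℕ) {t t' : ℝ}, 1 ≤ t → t ≤ t' → E n t ⊆ E n t' := by
    intro n t t' ht htt' x hx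
    simp only [hE, mem_setOf_eq] at hx ⊢
    exact fun k h1 h2 hmem => hx k h1 h2 (hTanti ht htt' hmem)
  have hHanti : ∀ (n : ℕ) {t t' : ℝ}, 1 ≤ t → t ≤ t' → H n t' ⊆ H n t := by
    intro n t t' ht htt'
    simp only [hH]
    exact iUnion₂_mono fun k _ => preimage_mono (hTanti ht htt')
  -- measure bound for the E events
  set bexp : ℕ → ℝ := fun n =>
    C * (1 + ((n:ℝ)+1) * Real.log 2 + |Real.log (v 1)|) * ((2:ℝ)^(n+1) + (v 1)⁻¹) / (NN n)
    with hbexp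
  have hv1pos : 0 < v 1 := hvpos 1 le_rfl
  have hbnonneg : ∀ n, 0 ≤ bexp n := by
    intro n
    simp only [hbexp]
    apply div_nonneg _ (by positivity)
    apply mul_nonneg (mul_nonneg hC.le _) (by positivity)
    have := abs_nonneg (Real.log (v 1))
    nlinarith [hl2.le, Nat.cast_nonneg (α := ℝ) n]
  have hEbound : ∀ (n : ℕ) (t : ℝ), t ∈ Lup n ∪ {1} →
      m (E n t) ≤ ENNReal.ofReal (bexp n) := by
    intro n t htmem
    have ht1 : (1:ℝ) ≤ t := by
      rcases htmem with h | h
      · exact h.1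
      · rw [mem_singleton_iff] at h; rw [h]
    have hvt : 0 < v t := hvpos t ht1
    rw [ENNReal.le_ofReal_iff_toReal_le (measure_ne_top m _) (hbnonneg n)]
    have hmain := hCo' t ht1 (NN n) (hNpos n)
    refine le_trans hmain ?_
    have hexpand : C * (1 + |Real.log (v t)|) / ((NN n : ℝ) * v t)
        = C * (1 + |Real.log (v t)|) * (v t)⁻¹ / (NN n : ℝ) := by
      have hNne : ((NN n : ℕ) : ℝ) ≠ 0 := by positivity
      field_simp
    rw [hexpand]
    simp only [hbexp]
    have habs : 0 ≤ |Real.log (v 1)| := abs_nonneg _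
    rcases htmem with hcase | hcase
    · -- t in the upper level set
      have h1 : |Real.log (v t)| ≤ ((n:ℝ)+1) * Real.log 2 := by
        rw [abs_of_nonpos (Real.log_nonpos hvt.le (hvle1 t))]
        have h2 : Real.log ((2:ℝ)^(n+1))⁻¹ ≤ Real.log (v t) :=
          Real.log_le_log (by positivity) hcase.2
        rw [Real.log_inv, Real.log_pow] at h2
        push_cast at h2
        linarith
      have h2 : (v t)⁻¹ ≤ (2:ℝ)^(n+1) := by
        have h3 := inv_anti₀ (show (0:ℝ) < ((2:ℝ)^(n+1))⁻¹ by positivity) hcase.2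
        simpa using h3
      apply div_le_div_of_nonneg_right ?_ (by positivity)
      apply mul_le_mul _ _ (by positivity) _
      · apply mul_le_mul_of_nonneg_left _ hC.le
        have := abs_nonneg (Real.log (v t))
        linarith
      · have : (0:ℝ) ≤ (v 1)⁻¹ := by positivity
        linarith
      · apply mul_nonneg hC.le
        have := abs_nonneg (Real.log (v 1))
        nlinarith [hl2.le, Nat.cast_nonneg (α := ℝ) n]
    · -- t = 1
      rw [mem_singleton_iff] at hcase
      subst hcase
      apply div_le_div_of_nonneg_right ?_ (by positivity)
      apply mul_le_mul _ _ (by positivity) _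
      · apply mul_le_mul_of_nonneg_left _ hC.le
        have h4 : (0:ℝ) ≤ ((n:ℝ)+1) * Real.log 2 := by positivity
        linarith
      · have : (0:ℝ) ≤ (2:ℝ)^(n+1) := by positivity
        linarith
      · apply mul_nonneg hC.le
        have := abs_nonneg (Real.log (v 1))
        nlinarith [hl2.le, Nat.cast_nonneg (α := ℝ) n]
  -- cofinal sequences for upper level sets
  have hLupBdd : ∀ n : ℕ, BddAbove (Lup n) := by
    intro n
    obtain ⟨a, ha⟩ := eventually_atTop.mp
      (hv0.eventually_lt_const (show (0:ℝ) < ((2:ℝ)^(n+1))⁻¹ by positivity))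
    refine ⟨a, fun t ht => ?_⟩
    by_contra hlt
    push_neg at hlt
    exact absurd (ha t hlt.le) (not_lt.mpr ht.2)
  have hcofinal := fun n => cofinal_seq_aux (Lup n) 1 (hLupBdd n)
  choose wup hwupM hwupmem hwupcof using hcofinal
  have hwup1 : ∀ n j, 1 ≤ wup n j := by
    intro n j
    rcases hwupmem n j with h | h
    · exact h.1
    · rw [mem_singleton_iff] at h; rw [h]
  -- summability for the E events
  have hbsum : Summable bexp := by
    set D : ℝ := C * (1 + Real.log 2 + |Real.log (v 1)|) * (1 + (v 1)⁻¹) with hD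
    have hDnn : 0 ≤ D := by
      apply mul_nonneg (mul_nonneg hC.le _) (by positivity)
      have := abs_nonneg (Real.log (v 1))
      linarith [hl2.le]
    have hle : ∀ n, bexp n ≤ D * (1 / ((n:ℝ)+1)^2) := by
      intro n
      simp only [hbexp, hD]
      have hNcast : ((NN n : ℕ) : ℝ) = ((n:ℝ)+1)^3 * (2:ℝ)^(n+1) := by
        simp only [hNN]; push_cast; ring
      rw [hNcast]
      have habs := abs_nonneg (Real.log (v 1))
      have hinv1 : (0:ℝ) ≤ (v 1)⁻¹ := by positivity
      have hn1 : (1:ℝ) ≤ (n:ℝ)+1 := by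
        have := Nat.cast_nonneg (α := ℝ) n; linarith
      have hp1 : (1:ℝ) ≤ (2:ℝ)^(n+1) := one_le_pow₀ (by norm_num)
      have hfac1 : 1 + ((n:ℝ)+1) * Real.log 2 + |Real.log (v 1)|
          ≤ ((n:ℝ)+1) * (1 + Real.log 2 + |Real.log (v 1)|) := by nlinarith [hl2.le]
      have hfac2 : (2:ℝ)^(n+1) + (v 1)⁻¹ ≤ (2:ℝ)^(n+1) * (1 + (v 1)⁻¹) := by nlinarith
      have hstep : C * (1 + ((n:ℝ)+1) * Real.log 2 + |Real.log (v 1)|) * ((2:ℝ)^(n+1) + (v 1)⁻¹)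
          ≤ C * (((n:ℝ)+1) * (1 + Real.log 2 + |Real.log (v 1)|)) * ((2:ℝ)^(n+1) * (1 + (v 1)⁻¹)) := by
        apply mul_le_mul _ hfac2 (by positivity) _
        · apply mul_le_mul_of_nonneg_left hfac1 hC.le
        · apply mul_nonneg hC.le
          apply mul_nonneg (by positivity)
          linarith [hl2.le, habs]
      calc C * (1 + ((n:ℝ)+1) * Real.log 2 + |Real.log (v 1)|) * ((2:ℝ)^(n+1) + (v 1)⁻¹)
            / (((n:ℝ)+1)^3 * (2:ℝ)^(n+1))
          ≤ C * (((n:ℝ)+1) * (1 + Real.log 2 + |Real.log (v 1)|)) * ((2:ℝ)^(n+1) * (1 + (v 1)⁻¹))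
            / (((n:ℝ)+1)^3 * (2:ℝ)^(n+1)) := by
            apply div_le_div_of_nonneg_right hstep (by positivity)
        _ = (C * (1 + Real.log 2 + |Real.log (v 1)|) * (1 + (v 1)⁻¹)) * (1 / ((n:ℝ)+1)^2) := by
            field_simp
    apply Summable.of_nonneg_of_le hbnonneg hle
    apply Summable.mul_left
    have hps := (Real.summable_one_div_nat_pow (p := 2)).mpr one_lt_two
    have := (summable_nat_add_iff 1).mpr hps
    apply this.congr
    intro n
    push_cast
    ring
  have hAmeasure : ∀ n : ℕ, m (⋃ j, E n (wup n j)) ≤ ENNReal.ofReal (bexp n) := by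
    intro n
    rw [Monotone.measure_iUnion (fun i j hij => hEmono n (hwup1 n i) (hwupM n hij))]
    exact iSup_le fun j => hEbound n _ (hwupmem n j)
  have hsumA : (∑' n, m (⋃ j, E n (wup n j))) ≠ ∞ := by
    apply ne_of_lt (lt_of_le_of_lt (ENNReal.tsum_le_tsum hAmeasure) _)
    rw [← ENNReal.ofReal_tsum_of_nonneg hbnonneg hbsum]
    exact ENNReal.ofReal_lt_top
  have hBC1 := ae_eventually_notMem (μ := m) hsumA
  -- coinitial sequences for lower level sets
  have hLloNe : ∀ n : ℕ, (Llo n).Nonempty := by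
    intro n
    obtain ⟨a, ha⟩ := eventually_atTop.mp
      (hv0.eventually_lt_const (show (0:ℝ) < ((2:ℝ)^n)⁻¹ by positivity))
    refine ⟨max a 1, le_max_right _ _, (ha _ (le_max_left _ _)).le⟩
  have hcoini := fun n => coinitial_seq_aux (Llo n) (hLloNe n) ⟨1, fun t ht => ht.1⟩
  choose wlo hwloA hwlomem hwlocof using hcoini
  have hwlo1 : ∀ n j, 1 ≤ wlo n j := fun n j => (hwlomem n j).1
  -- measure bound for the H events
  have hHbound : ∀ (n : ℕ) (t : ℝ), t ∈ Llo n →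
      m (H n t) ≤ ENNReal.ofReal (1 / ((n:ℝ)+1)^3) := by
    intro n t ht
    have hKcast : ((KK n : ℕ) : ℝ) ≤ (2:ℝ)^n / ((n:ℝ)+1)^3 := by
      have h := Nat.cast_div_le (α := ℝ) (m := 2^n) (n := (n+1)^3)
      simp only [hKK]
      push_cast at h ⊢
      convert h using 2 <;> push_cast <;> ring
    calc m (H n t) ≤ ∑ k ∈ Finset.Icc 1 (KK n), m (φ (k : ℝ) ⁻¹' T t) := by
          simp only [hH]
          exact measure_biUnion_finset_le _ _
      _ = ∑ k ∈ Finset.Icc 1 (KK n), m (T t) := by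
          refine Finset.sum_congr rfl fun k _ => ?_
          exact (hφpres (k : ℝ)).measure_preimage (hmeas' t ht.1).nullMeasurableSet
      _ = (KK n : ℝ≥0∞) * m (T t) := by
          rw [Finset.sum_const, Nat.card_Icc]
          simp [nsmul_eq_mul]
      _ ≤ (KK n : ℝ≥0∞) * ENNReal.ofReal (((2:ℝ)^n)⁻¹) := by
          gcongr
          exact (ENNReal.le_ofReal_iff_toReal_le (hTne t) (by positivity)).mpr ht.2
      _ ≤ ENNReal.ofReal (1 / ((n:ℝ)+1)^3) := by
          rw [show ((KK n : ℕ) : ℝ≥0∞) = ENNReal.ofReal ((KK n : ℕ) : ℝ) by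
              simp [ENNReal.ofReal_natCast],
            ← ENNReal.ofReal_mul (by positivity)]
          apply ENNReal.ofReal_le_ofReal
          calc ((KK n : ℕ) : ℝ) * ((2:ℝ)^n)⁻¹ ≤ ((2:ℝ)^n / ((n:ℝ)+1)^3) * ((2:ℝ)^n)⁻¹ := by
                apply mul_le_mul_of_nonneg_right hKcast (by positivity)
            _ = 1 / ((n:ℝ)+1)^3 := by field_simp
  have hA'measure : ∀ n : ℕ, m (⋃ j, H n (wlo n j)) ≤ ENNReal.ofReal (1 / ((n:ℝ)+1)^3) := by
    intro n
    rw [Monotone.measure_iUnion (fun i j hij => hHanti n (hwlo1 n j) (hwloA n hij))]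
    exact iSup_le fun j => hHbound n _ (hwlomem n j)
  have hsumA' : (∑' n, m (⋃ j, H n (wlo n j))) ≠ ∞ := by
    apply ne_of_lt (lt_of_le_of_lt (ENNReal.tsum_le_tsum hA'measure) _)
    have hsum3 : Summable fun n : ℕ => 1 / ((n:ℝ)+1)^3 := by
      have hps := (Real.summable_one_div_nat_pow (p := 3)).mpr (by norm_num)
      have := (summable_nat_add_iff 1).mpr hps
      apply this.congr
      intro n
      push_cast
      ring
    rw [← ENNReal.ofReal_tsum_of_nonneg (fun n => by positivity) hsum3]
    exact ENNReal.ofReal_lt_top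
  have hBC2 := ae_eventually_notMem (μ := m) hsumA'
  -- almost-everywhere combination
  filter_upwards [hBC1, hBC2] with x hx1 hx2
  obtain ⟨n₁, hn₁⟩ := eventually_atTop.mp hx1
  obtain ⟨n₂, hn₂⟩ := eventually_atTop.mp hx2
  set n₀ : ℕ := max (max n₁ n₂) 13 with hn₀
  have hup : ∀ n, n₀ ≤ n → ∀ t ∈ Lup n, ∃ k : ℕ, 1 ≤ k ∧ k ≤ NN n ∧ φ (k:ℝ) x ∈ T t := by
    intro n hn t ht
    obtain ⟨j, hj⟩ := hwupcof n t ht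
    have hxE : x ∉ E n t := by
      intro hmem
      exact hn₁ n (le_trans (le_trans (le_max_left _ _) (le_max_left _ _)) hn)
        (mem_iUnion.mpr ⟨j, hEmono n ht.1 hj hmem⟩)
    simp only [hE, mem_setOf_eq] at hxE
    push_neg at hxE
    exact hxE
  have hlo : ∀ n, n₀ ≤ n → ∀ t ∈ Llo n, ∀ k : ℕ, 1 ≤ k → k ≤ KK n → φ (k:ℝ) x ∉ T t := by
    intro n hn t ht k hk1 hk2 hmem
    obtain ⟨j, hj⟩ := hwlocof n t ht
    apply hn₂ n (le_trans (le_trans (le_max_right _ _) (le_max_left _ _)) hn)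
    refine mem_iUnion.mpr ⟨j, ?_⟩
    apply hHanti n (hwlo1 n j) hj
    simp only [hH, mem_iUnion, exists_prop]
    exact ⟨k, Finset.mem_Icc.mpr ⟨hk1, hk2⟩, hmem⟩
  -- bounding sequences for the ratio
  set aseq : ℕ → ℝ := fun n =>
    ((n:ℝ) * Real.log 2 - Real.log 2 - 3 * Real.log ((n:ℝ)+1)) / (((n:ℝ)+1) * Real.log 2)
    with haseq
  set bseq : ℕ → ℝ := fun n =>
    (3 * Real.log ((n:ℝ)+1) + ((n:ℝ)+2) * Real.log 2) / ((n:ℝ) * Real.log 2) with hbseq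
  -- the key pointwise estimate
  have key : ∀ t : ℝ, 1 ≤ t → v t ≤ ((2:ℝ)^(n₀+1))⁻¹ →
      {s : ℝ | 1 / 2 ≤ s ∧ φ s x ∈ B t}.Nonempty ∧
      aseq ⌊(-Real.log (v t)) / Real.log 2⌋₊
          ≤ Real.log (sInf {s : ℝ | 1 / 2 ≤ s ∧ φ s x ∈ B t}) / (-Real.log (v t)) ∧
      Real.log (sInf {s : ℝ | 1 / 2 ≤ s ∧ φ s x ∈ B t}) / (-Real.log (v t))
          ≤ bseq ⌊(-Real.log (v t)) / Real.log 2⌋₊ := by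
    intro t ht hvsmall
    have hvt : 0 < v t := hvpos t ht
    set L : ℝ := -Real.log (v t) with hL
    have hL1 : ((n₀:ℝ)+1) * Real.log 2 ≤ L := by
      have h := Real.log_le_log hvt hvsmall
      rw [Real.log_inv, Real.log_pow] at h
      push_cast at h
      simp only [hL]
      linarith
    set nt : ℕ := ⌊L / Real.log 2⌋₊ with hnt
    have hLpos : 0 < L := lt_of_lt_of_le (by positivity) hL1
    have hntge : n₀ + 1 ≤ nt := by
      apply Nat.le_floor
      rw [le_div_iff₀ hl2]
      push_cast
      linarith
    have hntn₀ : n₀ ≤ nt := le_trans (Nat.le_succ _) hntge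
    have hnt13 : 13 ≤ nt := le_trans (le_trans (le_max_right _ _) (Nat.le_succ _)) hntge
    have hnt1 : 1 ≤ nt := by omega
    have hfl : (nt:ℝ) * Real.log 2 ≤ L := by
      have h := Nat.floor_le (show 0 ≤ L / Real.log 2 by positivity)
      have h2 := mul_le_mul_of_nonneg_right h hl2.le
      rwa [div_mul_cancel₀ _ hl2.ne'] at h2
    have hfl' : L < ((nt:ℝ)+1) * Real.log 2 := by
      have h := Nat.lt_floor_add_one (L / Real.log 2)
      have h2 := (div_lt_iff₀ hl2).mp h
      push_cast at h2 ⊢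
      linarith
    have hvub : v t ≤ ((2:ℝ)^nt)⁻¹ := by
      have h1 : Real.log (v t) ≤ Real.log ((2:ℝ)^nt)⁻¹ := by
        rw [Real.log_inv, Real.log_pow]
        have : Real.log (v t) = -L := by simp [hL]
        rw [this]
        push_cast
        linarith
      calc v t = Real.exp (Real.log (v t)) := (Real.exp_log hvt).symm
        _ ≤ Real.exp (Real.log ((2:ℝ)^nt)⁻¹) := Real.exp_le_exp.mpr h1
        _ = ((2:ℝ)^nt)⁻¹ := Real.exp_log (by positivity)
    have hvlb : ((2:ℝ)^(nt+1))⁻¹ ≤ v t := by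
      have h1 : Real.log ((2:ℝ)^(nt+1))⁻¹ ≤ Real.log (v t) := by
        rw [Real.log_inv, Real.log_pow]
        have : Real.log (v t) = -L := by simp [hL]
        rw [this]
        push_cast
        linarith
      calc ((2:ℝ)^(nt+1))⁻¹ = Real.exp (Real.log ((2:ℝ)^(nt+1))⁻¹) :=
            (Real.exp_log (by positivity)).symm
        _ ≤ Real.exp (Real.log (v t)) := Real.exp_le_exp.mpr h1
        _ = v t := Real.exp_log hvt
    have htup : t ∈ Lup nt := by
      simp only [hLup, mem_setOf_eq]
      exact ⟨ht, hvlb⟩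
    have htlo : t ∈ Llo nt := by
      simp only [hLlo, mem_setOf_eq]
      exact ⟨ht, hvub⟩
    obtain ⟨k, hk1, hkN, hkT⟩ := hup nt hntn₀ t htup
    obtain ⟨s₀, hs₀a, hs₀b, hs₀B⟩ := hitup t ht x k hk1 hkT
    have hSne : {s : ℝ | 1 / 2 ≤ s ∧ φ s x ∈ B t}.Nonempty := ⟨s₀, hs₀a, hs₀B⟩
    have hSbdd : BddBelow {s : ℝ | 1 / 2 ≤ s ∧ φ s x ∈ B t} := ⟨1/2, fun s hs => hs.1⟩
    set τ : ℝ := sInf {s : ℝ | 1 / 2 ≤ s ∧ φ s x ∈ B t} with hτ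
    have hτub : τ ≤ (NN nt : ℝ) + 1/2 := by
      refine le_trans (csInf_le hSbdd ⟨hs₀a, hs₀B⟩) ?_
      have hkc : (k:ℝ) ≤ (NN nt : ℝ) := by exact_mod_cast hkN
      linarith
    have hτlb : (KK nt : ℝ) + 1/2 ≤ τ := by
      apply le_csInf hSne
      intro s hs
      obtain ⟨k', hk'1, hk'le, hk'ge, hk'T⟩ := hitdown t ht x s hs.1 hs.2
      have hgt : KK nt < k' := by
        by_contra hcon
        push_neg at hcon
        exact hlo nt hntn₀ t htlo k' hk'1 hcon hk'T
      have hgt' : (KK nt : ℝ) + 1 ≤ (k' : ℝ) := by exact_mod_cast hgt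
      linarith
    have hKlb : (2:ℝ)^nt / ((nt:ℝ)+1)^3 - 1 ≤ (KK nt : ℝ) := by
      have hbpos : 0 < (nt + 1)^3 := by positivity
      have hmod := Nat.div_add_mod (2^nt) ((nt+1)^3)
      have hmlt : 2^nt % (nt+1)^3 < (nt+1)^3 := Nat.mod_lt _ hbpos
      have hlt : 2^nt < (nt+1)^3 * (KK nt + 1) := by
        simp only [hKK]
        calc 2^nt = (nt+1)^3 * (2^nt / (nt+1)^3) + 2^nt % (nt+1)^3 := hmod.symm
          _ < (nt+1)^3 * (2^nt / (nt+1)^3) + (nt+1)^3 := by omega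
          _ = (nt+1)^3 * (2^nt / (nt+1)^3 + 1) := by ring
      have hcast : ((2:ℝ))^nt < ((nt:ℝ)+1)^3 * ((KK nt : ℝ) + 1) := by
        exact_mod_cast hlt
      have h3 : (0:ℝ) < ((nt:ℝ)+1)^3 := by positivity
      rw [sub_le_iff_le_add, div_le_iff₀ h3]
      nlinarith
    have hpow3 : 2 * ((nt:ℝ)+1)^3 ≤ (2:ℝ)^nt := pow_cube_le_real_aux nt hnt13
    have hXge : (2:ℝ) ≤ (2:ℝ)^nt / ((nt:ℝ)+1)^3 := by
      rw [le_div_iff₀ (by positivity)]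
      linarith
    have hτlb2 : (2:ℝ)^nt / (2*((nt:ℝ)+1)^3) ≤ τ := by
      have heq : (2:ℝ)^nt / (2*((nt:ℝ)+1)^3) = ((2:ℝ)^nt / ((nt:ℝ)+1)^3) / 2 := by
        field_simp
      rw [heq]
      have h4 := hXge
      linarith
    have hτpos : 0 < τ := lt_of_lt_of_le (by positivity) hτlb2
    have hlogτlb : (nt:ℝ) * Real.log 2 - Real.log 2 - 3 * Real.log ((nt:ℝ)+1) ≤ Real.log τ := by
      have h1 := Real.log_le_log (by positivity) hτlb2
      rw [Real.log_div (by positivity) (by positivity),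
        Real.log_mul (by norm_num) (by positivity), Real.log_pow, Real.log_pow] at h1
      push_cast at h1
      linarith
    have hlogτnn : 0 ≤ Real.log τ := by
      have h1 := Real.log_le_log (by positivity) hpow3
      rw [Real.log_mul (by norm_num) (by positivity), Real.log_pow, Real.log_pow] at h1
      push_cast at h1
      linarith
    have hlogτub : Real.log τ ≤ 3 * Real.log ((nt:ℝ)+1) + ((nt:ℝ)+2) * Real.log 2 := by
      have hNcast : ((NN nt : ℕ) : ℝ) = ((nt:ℝ)+1)^3 * (2:ℝ)^(nt+1) := by
        simp only [hNN]; push_cast; ring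
      have hN1 : (1:ℝ) ≤ ((NN nt : ℕ):ℝ) := by exact_mod_cast hNpos nt
      have h2 : τ ≤ ((nt:ℝ)+1)^3 * (2:ℝ)^(nt+2) := by
        have heq2 : ((nt:ℝ)+1)^3 * (2:ℝ)^(nt+2) = 2 * (((nt:ℝ)+1)^3 * (2:ℝ)^(nt+1)) := by
          ring
        rw [heq2, ← hNcast]
        linarith
      have h3 := Real.log_le_log hτpos h2
      rw [Real.log_mul (by positivity) (by positivity), Real.log_pow, Real.log_pow] at h3
      push_cast at h3
      linarith
    refine ⟨hSne, ?_, ?_⟩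
    · simp only [haseq]
      exact div_le_div₀ hlogτnn hlogτlb hLpos hfl'.le
    · simp only [hbseq]
      apply div_le_div₀ _ hlogτub (by positivity) hfl
      have hlognn : 0 ≤ Real.log ((nt:ℝ)+1) := Real.log_nonneg (by
        have := Nat.cast_nonneg (α := ℝ) nt; linarith)
      nlinarith [hl2.le, Nat.cast_nonneg (α := ℝ) nt]
  -- eventual hypotheses
  have hev : ∀ᶠ t : ℝ in atTop, 1 ≤ t ∧ v t ≤ ((2:ℝ)^(n₀+1))⁻¹ := by
    apply (eventually_ge_atTop 1).and
    exact (hv0.eventually_lt_const (show (0:ℝ) < ((2:ℝ)^(n₀+1))⁻¹ by positivity)).mono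
      fun t h => h.le
  obtain ⟨t₀, ht₀⟩ := eventually_atTop.mp hev
  refine ⟨t₀, fun t ht => (key t (ht₀ t ht).1 (ht₀ t ht).2).1, ?_⟩
  -- limits of the bounding sequences
  have hnn1 : Tendsto (fun n : ℕ => ((n:ℝ)+1)) atTop atTop :=
    tendsto_atTop_add_const_right _ 1 tendsto_natCast_atTop_atTop
  have hlog1 : Tendsto (fun n : ℕ => Real.log ((n:ℝ)+1) / ((n:ℝ)+1)) atTop (𝓝 0) :=
    Real.isLittleO_log_id_atTop.tendsto_div_nhds_zero.comp hnn1
  have hinv1 : Tendsto (fun n : ℕ => 1 / ((n:ℝ)+1)) atTop (𝓝 0) :=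
    tendsto_const_nhds.div_atTop hnn1
  have hinv0 : Tendsto (fun n : ℕ => 1 / (n:ℝ)) atTop (𝓝 0) :=
    tendsto_const_nhds.div_atTop tendsto_natCast_atTop_atTop
  have hlog2' : Tendsto (fun n : ℕ => Real.log ((n:ℝ)+1) / (n:ℝ)) atTop (𝓝 0) := by
    apply squeeze_zero' (g := fun n : ℕ => 2 * (Real.log ((n:ℝ)+1) / ((n:ℝ)+1)))
    · filter_upwards [eventually_ge_atTop 1] with n hn
      have h1 : (1:ℝ) ≤ (n:ℝ) := by exact_mod_cast hn
      apply div_nonneg (Real.log_nonneg (by linarith)) (by linarith)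
    · filter_upwards [eventually_ge_atTop 1] with n hn
      have h1 : (1:ℝ) ≤ (n:ℝ) := by exact_mod_cast hn
      have hlognn : 0 ≤ Real.log ((n:ℝ)+1) := Real.log_nonneg (by linarith)
      rw [div_le_iff₀ (by linarith), mul_comm (2:ℝ), mul_assoc, div_mul_eq_mul_div,
        le_div_iff₀ (by linarith)]
      nlinarith
    · simpa using tendsto_const_nhds.mul hlog1
  have haseqlim : Tendsto aseq atTop (𝓝 1) := by
    have heq : ∀ n : ℕ, aseq n
        = 1 - 2 * (1 / ((n:ℝ)+1)) - (3 / Real.log 2) * (Real.log ((n:ℝ)+1) / ((n:ℝ)+1)) := by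
      intro n
      simp only [haseq]
      have hn1 : ((n:ℝ)+1) ≠ 0 := by positivity
      field_simp
      ring
    have hlim : Tendsto (fun n : ℕ =>
        1 - 2 * (1 / ((n:ℝ)+1)) - (3 / Real.log 2) * (Real.log ((n:ℝ)+1) / ((n:ℝ)+1)))
        atTop (𝓝 (1 - 2 * 0 - (3 / Real.log 2) * 0)) :=
      (tendsto_const_nhds.sub (tendsto_const_nhds.mul hinv1)).sub
        (tendsto_const_nhds.mul hlog1)
    have := hlim.congr fun n => (heq n).symm
    simpa using this
  have hbseqlim : Tendsto bseq atTop (𝓝 1) := by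
    have heq : ∀ᶠ n : ℕ in atTop, bseq n
        = 1 + 2 * (1 / (n:ℝ)) + (3 / Real.log 2) * (Real.log ((n:ℝ)+1) / (n:ℝ)) := by
      filter_upwards [eventually_ge_atTop 1] with n hn
      have h1 : (1:ℝ) ≤ (n:ℝ) := by exact_mod_cast hn
      have hne : (n:ℝ) ≠ 0 := by linarith
      simp only [hbseq]
      field_simp
      ring
    have hlim : Tendsto (fun n : ℕ =>
        1 + 2 * (1 / (n:ℝ)) + (3 / Real.log 2) * (Real.log ((n:ℝ)+1) / (n:ℝ)))
        atTop (𝓝 (1 + 2 * 0 + (3 / Real.log 2) * 0)) :=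
      (tendsto_const_nhds.add (tendsto_const_nhds.mul hinv0)).add
        (tendsto_const_nhds.mul hlog2')
    have := hlim.congr' (EventuallyEq.symm heq)
    simpa using this
  -- the floor index tends to infinity
  have hnt_tend : Tendsto (fun t : ℝ => ⌊(-Real.log (v t)) / Real.log 2⌋₊) atTop atTop := by
    apply tendsto_nat_floor_atTop.comp
    apply Tendsto.atTop_div_const hl2
    have h1 : Tendsto (fun t : ℝ => Real.log (v t)) atTop atBot := by
      apply Real.tendsto_log_nhdsGT_zero.comp
      apply tendsto_nhdsWithin_of_tendsto_nhds_of_eventually_within _ hv0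
      exact (eventually_ge_atTop 1).mono fun t ht => hvpos t ht
    exact tendsto_neg_atBot_atTop.comp h1
  -- squeeze
  have hgoal : Tendsto (fun t : ℝ =>
      Real.log (sInf {s : ℝ | 1 / 2 ≤ s ∧ φ s x ∈ B t}) / (-Real.log (v t)))
      atTop (𝓝 1) := by
    apply tendsto_of_tendsto_of_tendsto_of_le_of_le' (haseqlim.comp hnt_tend)
      (hbseqlim.comp hnt_tend)
    · filter_upwards [hev] with t ht
      exact (key t ht.1 ht.2).2.1
    · filter_upwards [hev] with t ht
      exact (key t ht.1 ht.2).2.2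
  exact hgoal
end

section
/- (Lattice sum estimate from the proof of Proposition 5.5.) Let κ ≥ 1 be an integer and let δ be a real number with 2δ > κ. Then the series Σ_{v ∈ ℤ^κ, ‖v‖ ≥ R} ‖v‖^{−2δ} log(‖v‖/R) converges for every R ≥ 1 (here ‖·‖ denotes the Euclidean norm on ℝ^κ restricted to ℤ^κ), and there exist constants c₁, c₂ > 0 (depending only on κ and δ) such that for every real R ≥ 1: c₁ · R^{κ−2δ} ≤ Σ_{v ∈ ℤ^κ, ‖v‖ ≥ R} ‖v‖^{−2δ} log(‖v‖/R) ≤ c₂ · R^{κ−2δ}. -/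
open Set

/-- The Euclidean norm of a lattice point `v ∈ ℤ^κ`. -/
noncomputable def latticeNorm (κ : ℕ) (v : Fin κ → ℤ) : ℝ :=
  Real.sqrt (∑ i : Fin κ, ((v i : ℝ)) ^ 2)

/-- The summand `‖v‖^{−2δ} · log(‖v‖/R)` restricted to `‖v‖ ≥ R` (and `0`
otherwise). -/
noncomputable def latticeTerm (κ : ℕ) (δ R : ℝ) (v : Fin κ → ℤ) : ℝ :=
  if R ≤ latticeNorm κ v
  then latticeNorm κ v ^ (-(2 * δ)) * Real.log (latticeNorm κ v / R)
  else 0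

namespace LatticeAux

def maxAbs (κ : ℕ) (v : Fin κ → ℤ) : ℕ := Finset.univ.sup fun i => (v i).natAbs

lemma latticeNorm_nonneg (κ : ℕ) (v : Fin κ → ℤ) : 0 ≤ latticeNorm κ v :=
  Real.sqrt_nonneg _

lemma coord_le_norm {κ : ℕ} (v : Fin κ → ℤ) (i : Fin κ) :
    |(v i : ℝ)| ≤ latticeNorm κ v := by
  rw [latticeNorm, ← Real.sqrt_sq_eq_abs]
  exact Real.sqrt_le_sqrt (Finset.single_le_sum (f := fun j => ((v j : ℝ))^2)
    (fun j _ => sq_nonneg _) (Finset.mem_univ i))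

lemma natAbs_le_maxAbs {κ : ℕ} (v : Fin κ → ℤ) (i : Fin κ) :
    (v i).natAbs ≤ maxAbs κ v :=
  Finset.le_sup (f := fun i => (v i).natAbs) (Finset.mem_univ i)

lemma maxAbs_le_norm {κ : ℕ} (hκ : 1 ≤ κ) (v : Fin κ → ℤ) :
    (maxAbs κ v : ℝ) ≤ latticeNorm κ v := by
  have : Nonempty (Fin κ) := ⟨⟨0, hκ⟩⟩
  obtain ⟨i, -, hi⟩ := Finset.exists_mem_eq_sup (Finset.univ : Finset (Fin κ))
    Finset.univ_nonempty (fun i => (v i).natAbs)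
  rw [maxAbs, hi, Nat.cast_natAbs]
  push_cast
  exact coord_le_norm v i

lemma norm_le_sqrt_mul_maxAbs {κ : ℕ} (v : Fin κ → ℤ) :
    latticeNorm κ v ≤ Real.sqrt κ * maxAbs κ v := by
  have h1 : latticeNorm κ v ≤ Real.sqrt (κ * (maxAbs κ v)^2) := by
    apply Real.sqrt_le_sqrt
    have : ∀ i : Fin κ, ((v i : ℝ))^2 ≤ ((maxAbs κ v : ℝ))^2 := by
      intro i
      have h := natAbs_le_maxAbs v i
      have : |(v i : ℝ)| ≤ (maxAbs κ v : ℝ) := by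
        rw [← Int.cast_abs, Int.abs_eq_natAbs]; exact_mod_cast h
      calc ((v i : ℝ))^2 = |(v i : ℝ)|^2 := (sq_abs _).symm
        _ ≤ _ := by have := abs_nonneg ((v i : ℝ)); gcongr
    calc ∑ i : Fin κ, ((v i : ℝ))^2 ≤ ∑ _i : Fin κ, ((maxAbs κ v : ℝ))^2 :=
          Finset.sum_le_sum fun i _ => this i
      _ = κ * (maxAbs κ v)^2 := by simp [mul_comm]
  calc latticeNorm κ v ≤ _ := h1
    _ = Real.sqrt κ * maxAbs κ v := by
      rw [Real.sqrt_mul (by positivity), Real.sqrt_sq (by positivity)]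

lemma bernoulli_aux {t y : ℝ} (ht : 0 < t) (hy0 : 0 < y) (hy1 : y < 1) :
    1 + t * (1 - y) ≤ y ^ (-t) := by
  have h1 : y ^ (-t) = Real.exp (Real.log y * (-t)) := Real.rpow_def_of_pos hy0 _
  have h2 : Real.log y ≤ y - 1 := Real.log_le_sub_one_of_pos hy0
  have h3 : t * (1 - y) ≤ Real.log y * (-t) := by nlinarith
  calc 1 + t * (1 - y) ≤ Real.exp (t * (1 - y)) := by
        have := Real.add_one_le_exp (t * (1 - y)); linarith
    _ ≤ Real.exp (Real.log y * (-t)) := Real.exp_le_exp.2 h3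
    _ = y ^ (-t) := h1.symm

lemma key_ineq {t x : ℝ} (ht : 0 < t) (hx : 1 ≤ x) :
    t * (x + 1) ^ (-(1 + t)) ≤ x ^ (-t) - (x + 1) ^ (-t) := by
  have hx0 : (0:ℝ) < x := by linarith
  have hx1 : (0:ℝ) < x + 1 := by linarith
  set y : ℝ := x / (x + 1) with hy
  have hy0 : 0 < y := by positivity
  have hy1 : y < 1 := by rw [hy, div_lt_one hx1]; linarith
  have hb := bernoulli_aux ht hy0 hy1
  have hyx : y ^ (-t) = x ^ (-t) / (x + 1) ^ (-t) := by
    rw [hy, Real.div_rpow hx0.le hx1.le]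
  have h1my : 1 - y = 1 / (x + 1) := by rw [hy]; field_simp; ring
  have hp : (0:ℝ) < (x + 1) ^ (-t) := Real.rpow_pos_of_pos hx1 _
  have hsplit : (x + 1) ^ (-(1 + t)) = (x + 1) ^ (-t) / (x + 1) := by
    rw [show -(1 + t) = -t + (-1) by ring, Real.rpow_add hx1, Real.rpow_neg_one]
    field_simp
  have := mul_le_mul_of_nonneg_left hb hp.le
  rw [hyx, h1my] at this
  have hxx : (x + 1) ^ (-t) * (x ^ (-t) / (x + 1) ^ (-t)) = x ^ (-t) := by
    field_simp
  rw [mul_add, hxx, mul_one] at this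
  rw [hsplit]
  have : (x + 1) ^ (-t) + (x + 1) ^ (-t) * (t * (1 / (x + 1))) ≤ x ^ (-t) := this
  calc t * ((x + 1) ^ (-t) / (x + 1)) = (x + 1) ^ (-t) * (t * (1 / (x + 1))) := by ring
    _ ≤ x ^ (-t) - (x + 1) ^ (-t) := by linarith

lemma tail_sum {t : ℝ} (ht : 0 < t) {m₀ : ℕ} (hm₀ : 1 ≤ m₀) (N : ℕ) :
    ∑ m ∈ Finset.Icc m₀ N, ((m:ℝ)) ^ (-(1 + t)) ≤ (1 + 1/t) * (m₀:ℝ) ^ (-t) := by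
  have hm₀R : (1:ℝ) ≤ (m₀:ℝ) := by exact_mod_cast hm₀
  have key : ∀ N : ℕ, ∑ m ∈ Finset.Icc m₀ N, ((m:ℝ)) ^ (-(1 + t)) ≤
      (1 + 1/t) * (m₀:ℝ) ^ (-t) - (1/t) * ((max m₀ N : ℕ):ℝ) ^ (-t) := by
    intro N
    induction N with
    | zero =>
      rw [Finset.Icc_eq_empty (by omega)]
      have hmax : max m₀ 0 = m₀ := by omega
      rw [hmax]
      have hpos : (0:ℝ) < (m₀:ℝ) ^ (-t) := Real.rpow_pos_of_pos (by linarith) _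
      have : (1/t) * (m₀:ℝ) ^ (-t) ≤ 1 * (m₀:ℝ) ^ (-t) + (1/t) * (m₀:ℝ) ^ (-t) := by nlinarith
      simp only [Finset.sum_empty]
      nlinarith
    | succ n ih =>
      rcases lt_or_ge (n + 1) m₀ with h | h
      · rw [Finset.Icc_eq_empty (by omega)]
        have hmax : max m₀ (n+1) = m₀ := by omega
        rw [hmax]
        have hpos : (0:ℝ) < (m₀:ℝ) ^ (-t) := Real.rpow_pos_of_pos (by linarith) _
        simp only [Finset.sum_empty]
        nlinarith
      · rw [Finset.sum_Icc_succ_top (by omega)]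
        have hmax : max m₀ (n+1) = n+1 := by omega
        rw [hmax]
        rcases eq_or_lt_of_le h with heq | hlt
        · -- n + 1 = m₀
          rw [Finset.Icc_eq_empty (by omega), Finset.sum_empty, zero_add, ← heq]
          have h1 : ((n+1:ℕ):ℝ) ^ (-(1+t)) ≤ ((n+1:ℕ):ℝ) ^ (-t) := by
            apply Real.rpow_le_rpow_of_exponent_le _ (by linarith)
            rw [← heq]; exact hm₀R
          have h2 : (m₀:ℝ) ^ (-t) = ((n+1:ℕ):ℝ) ^ (-t) := by rw [← heq]
          have h3 : (m₀:ℝ) ^ (-(1+t)) = ((n+1:ℕ):ℝ) ^ (-(1+t)) := by rw [← heq]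
          rw [h2, h3]; nlinarith
        · -- m₀ ≤ n
          have hn : m₀ ≤ n := by omega
          have ihn := ih
          have hmaxn : max m₀ n = n := by omega
          rw [hmaxn] at ihn
          have hnR : (1:ℝ) ≤ (n:ℝ) := by
            have : 1 ≤ n := le_trans hm₀ hn
            exact_mod_cast this
          have hkey := key_ineq ht hnR
          have hcast : ((n+1:ℕ):ℝ) = (n:ℝ) + 1 := by push_cast; ring
          rw [hcast]
          have : ((n:ℝ)+1) ^ (-(1+t)) ≤ (1/t) * ((n:ℝ) ^ (-t) - ((n:ℝ)+1) ^ (-t)) := by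
            rw [div_mul_eq_mul_div, le_div_iff₀ ht]
            nlinarith [key_ineq ht hnR]
          linarith
  calc ∑ m ∈ Finset.Icc m₀ N, ((m:ℝ)) ^ (-(1 + t)) ≤ _ := key N
    _ ≤ (1 + 1/t) * (m₀:ℝ) ^ (-t) := by
      have : (0:ℝ) ≤ (1/t) * ((max m₀ N : ℕ):ℝ) ^ (-t) := by positivity
      linarith

lemma shell_card {κ : ℕ} (hκ : 1 ≤ κ) (m : ℕ) (s : Finset (Fin κ → ℤ)) :
    ({v ∈ s | maxAbs κ v = m}).card ≤ 2 * κ * (2*m+1)^(κ-1) := by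
  classical
  have : Nonempty (Fin κ) := ⟨⟨0, hκ⟩⟩
  set A : Fin κ → Finset (Fin κ → ℤ) := fun i =>
    Fintype.piFinset (fun j => if j = i then ({(m:ℤ), -(m:ℤ)} : Finset ℤ)
      else Finset.Icc (-(m:ℤ)) (m:ℤ)) with hA
  have hsub : {v ∈ s | maxAbs κ v = m} ⊆ Finset.univ.biUnion A := by
    intro v hv
    rw [Finset.mem_filter] at hv
    obtain ⟨-, hvm⟩ := hv
    obtain ⟨i, -, hi⟩ := Finset.exists_mem_eq_sup (Finset.univ : Finset (Fin κ))
      Finset.univ_nonempty (fun i => (v i).natAbs)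
    rw [maxAbs] at hvm
    rw [hvm] at hi
    apply Finset.mem_biUnion.2 ⟨i, Finset.mem_univ i, ?_⟩
    rw [hA, Fintype.mem_piFinset]
    intro j
    by_cases hj : j = i
    · simp only [hj, if_pos rfl]
      have : (v i).natAbs = m := hi.symm
      rcases Int.natAbs_eq (v i) with h | h
      · rw [this] at h
        simp [h]
      · rw [this] at h
        simp [h]
    · simp only [if_neg hj, Finset.mem_Icc]
      have : (v j).natAbs ≤ m := hvm ▸ natAbs_le_maxAbs v j
      omega
  calc ({v ∈ s | maxAbs κ v = m}).card ≤ (Finset.univ.biUnion A).card :=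
        Finset.card_le_card hsub
    _ ≤ ∑ i : Fin κ, (A i).card := Finset.card_biUnion_le
    _ ≤ ∑ _i : Fin κ, 2 * (2*m+1)^(κ-1) := by
        apply Finset.sum_le_sum
        intro i _
        rw [hA, Fintype.card_piFinset]
        have hcard : ∀ j : Fin κ, (if j = i then ({(m:ℤ), -(m:ℤ)} : Finset ℤ)
            else Finset.Icc (-(m:ℤ)) (m:ℤ)).card ≤ if j = i then 2 else 2*m+1 := by
          intro j
          by_cases hj : j = i
          · simp only [if_pos hj]
            exact le_trans (Finset.card_insert_le _ _) (by simp)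
          · simp only [if_neg hj, Int.card_Icc]
            omega
        calc ∏ j : Fin κ, (if j = i then ({(m:ℤ), -(m:ℤ)} : Finset ℤ)
              else Finset.Icc (-(m:ℤ)) (m:ℤ)).card
            ≤ ∏ j : Fin κ, (if j = i then 2 else 2*m+1) :=
              Finset.prod_le_prod (fun _ _ => Nat.zero_le _) (fun j _ => hcard j)
          _ = 2 * (2*m+1)^(κ-1) := by
              rw [← Finset.mul_prod_erase Finset.univ _ (Finset.mem_univ i)]
              rw [if_pos rfl]
              congr 1
              rw [Finset.prod_congr rfl (fun j hj => if_neg (Finset.ne_of_mem_erase hj))]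
              rw [Finset.prod_const, Finset.card_erase_of_mem (Finset.mem_univ i),
                Finset.card_univ, Fintype.card_fin]
    _ = 2 * κ * (2*m+1)^(κ-1) := by
        rw [Finset.sum_const, Finset.card_univ, Fintype.card_fin]; ring

lemma latticeTerm_nonneg (κ : ℕ) (δ R : ℝ) (hR : 1 ≤ R) (v : Fin κ → ℤ) :
    0 ≤ latticeTerm κ δ R v := by
  rw [latticeTerm]
  split
  · next h =>
    apply mul_nonneg (Real.rpow_nonneg (latticeNorm_nonneg κ v) _)
    apply Real.log_nonneg
    rw [le_div_iff₀ (by linarith)]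
    linarith
  · exact le_refl 0

/-- The dominating shell function. -/
noncomputable def gfun (κ : ℕ) (t R : ℝ) (m : ℕ) : ℝ :=
  if R ≤ Real.sqrt κ * m then ((m:ℝ)) ^ (-((κ:ℝ) + t)) else 0

lemma gfun_nonneg (κ : ℕ) (t R : ℝ) (m : ℕ) : 0 ≤ gfun κ t R m := by
  rw [gfun]; split
  · exact Real.rpow_nonneg (Nat.cast_nonneg m) _
  · exact le_refl 0

lemma pointwise_bound {κ : ℕ} (hκ : 1 ≤ κ) {δ ε t R : ℝ} (hε : 0 < ε) (ht : 0 < t)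
    (heq : 2*δ = 2*ε + ((κ:ℝ) + t)) (hR : 1 ≤ R) (v : Fin κ → ℤ) :
    latticeTerm κ δ R v ≤ (1/ε) * R ^ (-(2*ε)) * gfun κ t R (maxAbs κ v) := by
  have hR0 : (0:ℝ) < R := by linarith
  rw [latticeTerm]
  split
  · next hn =>
    set n := latticeNorm κ v with hn'
    have hn1 : (1:ℝ) ≤ n := le_trans hR hn
    have hn0 : (0:ℝ) < n := by linarith
    set M := maxAbs κ v with hM'
    have hMn : (M:ℝ) ≤ n := maxAbs_le_norm hκ v
    have hnM : n ≤ Real.sqrt κ * M := norm_le_sqrt_mul_maxAbs v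
    have hcond : R ≤ Real.sqrt κ * M := le_trans hn hnM
    have hM0 : (0:ℝ) < (M:ℝ) := by
      by_contra h
      push_neg at h
      have : Real.sqrt κ * (M:ℝ) ≤ 0 := mul_nonpos_of_nonneg_of_nonpos (Real.sqrt_nonneg _) h
      linarith
    rw [gfun, if_pos hcond]
    have hlog : Real.log (n / R) ≤ (n / R) ^ ε / ε :=
      Real.log_le_rpow_div (by positivity) hε
    have step1 : n ^ (-(2*δ)) * Real.log (n / R) ≤ n ^ (-(2*δ)) * ((n / R) ^ ε / ε) :=
      mul_le_mul_of_nonneg_left hlog (Real.rpow_nonneg hn0.le _)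
    have hmerge : n ^ (-ε) * n ^ (-((κ:ℝ) + t)) = n ^ (-(2*δ)) * n ^ ε := by
      rw [← Real.rpow_add hn0, ← Real.rpow_add hn0]
      congr 1
      linarith
    have hRε : R ^ ε ≠ 0 := (Real.rpow_pos_of_pos hR0 ε).ne'
    have e1 : n ^ (-(2*δ)) * ((n / R) ^ ε / ε) =
        (1/ε) * (R ^ (-ε) * (n ^ (-ε) * n ^ (-((κ:ℝ) + t)))) := by
      rw [hmerge, Real.div_rpow hn0.le hR0.le, Real.rpow_neg hR0.le]
      field_simp
    have step2 : R ^ (-ε) * (n ^ (-ε) * n ^ (-((κ:ℝ) + t))) ≤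
        R ^ (-ε) * (R ^ (-ε) * ((M:ℝ) ^ (-((κ:ℝ) + t)))) := by
      have b1 : n ^ (-ε) ≤ R ^ (-ε) :=
        Real.rpow_le_rpow_of_nonpos hR0 hn (by linarith)
      have b2 : n ^ (-((κ:ℝ) + t)) ≤ (M:ℝ) ^ (-((κ:ℝ) + t)) :=
        Real.rpow_le_rpow_of_nonpos hM0 hMn (by
          have : (0:ℝ) ≤ (κ:ℝ) := Nat.cast_nonneg κ
          linarith)
      have p1 : (0:ℝ) ≤ R ^ (-ε) := Real.rpow_nonneg hR0.le _
      have p2 : (0:ℝ) ≤ n ^ (-ε) := Real.rpow_nonneg hn0.le _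
      have p3 : (0:ℝ) ≤ n ^ (-((κ:ℝ) + t)) := Real.rpow_nonneg hn0.le _
      apply mul_le_mul_of_nonneg_left _ p1
      exact mul_le_mul b1 b2 p3 p1
    have e2 : (1/ε) * (R ^ (-ε) * (R ^ (-ε) * ((M:ℝ) ^ (-((κ:ℝ) + t))))) =
        (1/ε) * R ^ (-(2*ε)) * ((M:ℝ) ^ (-((κ:ℝ) + t))) := by
      rw [show -(2*ε) = -ε + -ε by ring, Real.rpow_add hR0]
      ring
    calc n ^ (-(2*δ)) * Real.log (n / R) ≤ _ := step1
      _ = _ := e1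
      _ ≤ (1/ε) * (R ^ (-ε) * (R ^ (-ε) * ((M:ℝ) ^ (-((κ:ℝ) + t))))) := by
          apply mul_le_mul_of_nonneg_left step2 (by positivity)
      _ = _ := e2
  · next h =>
    have : 0 ≤ gfun κ t R (maxAbs κ v) := gfun_nonneg κ t R _
    positivity

/-- Sum of the shell function over any finite set. -/
lemma gfun_sum_bound {κ : ℕ} (hκ : 1 ≤ κ) {t R : ℝ} (ht : 0 < t) (hR : 1 ≤ R)
    (s : Finset (Fin κ → ℤ)) :
    ∑ v ∈ s, gfun κ t R (maxAbs κ v) ≤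
      (2*κ*3^(κ-1) : ℕ) * ((1 + 1/t) * (Real.sqrt κ) ^ t * R ^ (-t)) := by
  classical
  have hκR : (1:ℝ) ≤ (κ:ℝ) := by exact_mod_cast hκ
  have hsκ : (0:ℝ) < Real.sqrt κ := Real.sqrt_pos.2 (by linarith)
  have hR0 : (0:ℝ) < R := by linarith
  set N : ℕ := s.sup (maxAbs κ) with hN
  set Box : Finset (Fin κ → ℤ) :=
    Fintype.piFinset (fun _ => Finset.Icc (-(N:ℤ)) (N:ℤ)) with hBox
  have hsBox : s ⊆ Box := by
    intro v hv
    rw [hBox, Fintype.mem_piFinset]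
    intro j
    have h1 : (v j).natAbs ≤ maxAbs κ v := natAbs_le_maxAbs v j
    have h2 : maxAbs κ v ≤ N := Finset.le_sup hv
    rw [Finset.mem_Icc]
    omega
  have step_subset : ∑ v ∈ s, gfun κ t R (maxAbs κ v) ≤
      ∑ v ∈ Box, gfun κ t R (maxAbs κ v) :=
    Finset.sum_le_sum_of_subset_of_nonneg hsBox (fun v _ _ => gfun_nonneg κ t R _)
  have hmaps : ∀ v ∈ Box, maxAbs κ v ∈ Finset.range (N+1) := by
    intro v hv
    rw [hBox, Fintype.mem_piFinset] at hv
    rw [Finset.mem_range]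
    have : maxAbs κ v ≤ N := by
      apply Finset.sup_le
      intro i _
      have := hv i
      rw [Finset.mem_Icc] at this
      omega
    omega
  have step_fiber : ∑ v ∈ Box, gfun κ t R (maxAbs κ v) =
      ∑ m ∈ Finset.range (N+1), ({v ∈ Box | maxAbs κ v = m}).card * gfun κ t R m := by
    rw [← Finset.sum_fiberwise_of_maps_to hmaps (fun v => gfun κ t R (maxAbs κ v))]
    apply Finset.sum_congr rfl
    intro m _
    calc ∑ v ∈ {v ∈ Box | maxAbs κ v = m}, gfun κ t R (maxAbs κ v)
        = ∑ _v ∈ {v ∈ Box | maxAbs κ v = m}, gfun κ t R m :=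
          Finset.sum_congr rfl (fun v hv => by rw [(Finset.mem_filter.1 hv).2])
      _ = ({v ∈ Box | maxAbs κ v = m}).card * gfun κ t R m := by
          rw [Finset.sum_const, nsmul_eq_mul]
  -- per-shell bound
  set m₀ : ℕ := max 1 ⌈R / Real.sqrt κ⌉₊ with hm₀
  have hm₀1 : 1 ≤ m₀ := le_max_left _ _
  have step_count : ∑ m ∈ Finset.range (N+1), ({v ∈ Box | maxAbs κ v = m}).card * gfun κ t R m ≤
      (2*κ*3^(κ-1) : ℕ) * ∑ m ∈ Finset.Icc m₀ N, ((m:ℝ)) ^ (-(1+t)) := by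
    rw [Finset.mul_sum]
    have key : ∀ m ∈ Finset.range (N+1),
        ({v ∈ Box | maxAbs κ v = m}).card * gfun κ t R m ≤
        (2*κ*3^(κ-1) : ℕ) * (if m ∈ Finset.Icc m₀ N then ((m:ℝ)) ^ (-(1+t)) else 0) := by
      intro m hm
      rw [Finset.mem_range] at hm
      rw [gfun]
      split
      · next hcond =>
        -- R ≤ √κ * m, so m ≥ 1 and m ≥ m₀
        have hm1 : 1 ≤ m := by
          by_contra h
          push_neg at h
          interval_cases m
          simp at hcond
          linarith
        have hmm₀ : m₀ ≤ m := by
          rw [hm₀]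
          apply max_le hm1
          rw [Nat.ceil_le, div_le_iff₀ hsκ]
          linarith [mul_comm (Real.sqrt κ) (m:ℝ)]
        rw [if_pos (Finset.mem_Icc.2 ⟨hmm₀, by omega⟩)]
        have hmR : (1:ℝ) ≤ (m:ℝ) := by exact_mod_cast hm1
        have hmpos : (0:ℝ) < (m:ℝ) := by linarith
        have hcard : (({v ∈ Box | maxAbs κ v = m}).card : ℝ) ≤
            ((2*κ*3^(κ-1) : ℕ) : ℝ) * ((m:ℝ)) ^ ((κ:ℝ) - 1) := by
          have h1 : ({v ∈ Box | maxAbs κ v = m}).card ≤ 2*κ*(2*m+1)^(κ-1) :=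
            shell_card hκ m Box
          have h2 : (2*m+1)^(κ-1) ≤ (3*m)^(κ-1) :=
            Nat.pow_le_pow_left (by omega) _
          have h3 : ({v ∈ Box | maxAbs κ v = m}).card ≤ 2*κ*3^(κ-1)*m^(κ-1) := by
            calc _ ≤ 2*κ*(2*m+1)^(κ-1) := h1
              _ ≤ 2*κ*(3*m)^(κ-1) := by exact Nat.mul_le_mul_left _ h2
              _ = 2*κ*3^(κ-1)*m^(κ-1) := by rw [mul_pow]; ring
          calc (({v ∈ Box | maxAbs κ v = m}).card : ℝ) ≤
              ((2*κ*3^(κ-1)*m^(κ-1) : ℕ) : ℝ) := by exact_mod_cast h3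
            _ = ((2*κ*3^(κ-1) : ℕ) : ℝ) * ((m:ℝ)) ^ ((κ:ℝ) - 1) := by
                push_cast
                rw [← Real.rpow_natCast (m:ℝ) (κ-1)]
                rw [Nat.cast_sub hκ]
                push_cast
                ring
        calc (({v ∈ Box | maxAbs κ v = m}).card : ℝ) * ((m:ℝ)) ^ (-((κ:ℝ) + t))
            ≤ ((2*κ*3^(κ-1) : ℕ) : ℝ) * ((m:ℝ)) ^ ((κ:ℝ) - 1) * ((m:ℝ)) ^ (-((κ:ℝ) + t)) := by
              apply mul_le_mul_of_nonneg_right hcard (Real.rpow_nonneg hmpos.le _)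
          _ = ((2*κ*3^(κ-1) : ℕ) : ℝ) * ((m:ℝ)) ^ (-(1+t)) := by
              rw [mul_assoc, ← Real.rpow_add hmpos]
              congr 2
              ring
      · next hcond =>
        rw [mul_zero]
        split
        · positivity
        · simp
    calc _ ≤ ∑ m ∈ Finset.range (N+1),
          ((2*κ*3^(κ-1) : ℕ) : ℝ) * (if m ∈ Finset.Icc m₀ N then ((m:ℝ)) ^ (-(1+t)) else 0) :=
        Finset.sum_le_sum key
      _ ≤ ∑ m ∈ Finset.Icc m₀ N, ((2*κ*3^(κ-1) : ℕ) : ℝ) * ((m:ℝ)) ^ (-(1+t)) := by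
          simp only [mul_ite, mul_zero]
          rw [← Finset.sum_filter]
          apply Finset.sum_le_sum_of_subset_of_nonneg
          · intro m hm
            rw [Finset.mem_filter] at hm
            exact hm.2
          · intro m _ _
            positivity
  have step_tail : ∑ m ∈ Finset.Icc m₀ N, ((m:ℝ)) ^ (-(1+t)) ≤
      (1 + 1/t) * (Real.sqrt κ) ^ t * R ^ (-t) := by
    calc _ ≤ (1 + 1/t) * (m₀:ℝ) ^ (-t) := tail_sum ht hm₀1 N
      _ ≤ (1 + 1/t) * ((Real.sqrt κ) ^ t * R ^ (-t)) := by
          apply mul_le_mul_of_nonneg_left _ (by positivity)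
          have hq : (0:ℝ) < R / Real.sqrt κ := by positivity
          have hm₀ge : R / Real.sqrt κ ≤ (m₀:ℝ) := by
            calc R / Real.sqrt κ ≤ (⌈R / Real.sqrt κ⌉₊ : ℝ) := Nat.le_ceil _
              _ ≤ (m₀:ℝ) := by exact_mod_cast le_max_right 1 _
          calc (m₀:ℝ) ^ (-t) ≤ (R / Real.sqrt κ) ^ (-t) :=
              Real.rpow_le_rpow_of_nonpos hq hm₀ge (by linarith)
            _ = (Real.sqrt κ) ^ t * R ^ (-t) := by
              rw [Real.div_rpow hR0.le hsκ.le, Real.rpow_neg hR0.le, Real.rpow_neg hsκ.le]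
              field_simp
      _ = (1 + 1/t) * (Real.sqrt κ) ^ t * R ^ (-t) := by ring
  calc ∑ v ∈ s, gfun κ t R (maxAbs κ v) ≤ _ := step_subset
    _ = _ := step_fiber
    _ ≤ (2*κ*3^(κ-1) : ℕ) * ∑ m ∈ Finset.Icc m₀ N, ((m:ℝ)) ^ (-(1+t)) := step_count
    _ ≤ _ := by
        apply mul_le_mul_of_nonneg_left step_tail (by positivity)

lemma lower_sum {κ : ℕ} (hκ : 1 ≤ κ) {δ R : ℝ} (hδ : (κ:ℝ) < 2*δ) (hR : 1 ≤ R) :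
    ∃ T : Finset (Fin κ → ℤ),
      ((6*Real.sqrt κ) ^ (-(2*δ)) * Real.log 2) * R ^ ((κ:ℝ)-2*δ) ≤
        ∑ v ∈ T, latticeTerm κ δ R v := by
  classical
  have hκR : (1:ℝ) ≤ (κ:ℝ) := by exact_mod_cast hκ
  have hsκ : (0:ℝ) < Real.sqrt κ := Real.sqrt_pos.2 (by linarith)
  have hR0 : (0:ℝ) < R := by linarith
  have h2δ : (0:ℝ) < 2*δ := by linarith
  set n₀ : ℕ := ⌈R⌉₊ with hn₀
  have hn₀1 : 1 ≤ n₀ := Nat.one_le_ceil_iff.2 hR0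
  have hn₀R : R ≤ (n₀:ℝ) := Nat.le_ceil R
  have hn₀2R : (n₀:ℝ) ≤ 2*R := by
    have := Nat.ceil_lt_add_one hR0.le
    linarith
  set T : Finset (Fin κ → ℤ) :=
    Fintype.piFinset (fun _ => Finset.Icc ((2*n₀ : ℕ):ℤ) ((3*n₀ : ℕ):ℤ)) with hT
  refine ⟨T, ?_⟩
  set B : ℝ := 6*Real.sqrt κ * R with hB
  have hB0 : 0 < B := by positivity
  have key : ∀ v ∈ T, B ^ (-(2*δ)) * Real.log 2 ≤ latticeTerm κ δ R v := by
    intro v hv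
    rw [hT, Fintype.mem_piFinset] at hv
    have hco : ∀ i, ((2*n₀ : ℕ):ℤ) ≤ v i ∧ v i ≤ ((3*n₀ : ℕ):ℤ) := by
      intro i
      have := hv i
      rw [Finset.mem_Icc] at this
      exact this
    set i₀ : Fin κ := ⟨0, hκ⟩
    have hlow : 2*R ≤ (v i₀ : ℝ) := by
      have h := (hco i₀).1
      have : ((2*n₀ : ℕ):ℝ) ≤ (v i₀ : ℝ) := by exact_mod_cast h
      push_cast at this
      linarith
    have hnlow : 2*R ≤ latticeNorm κ v := by
      calc 2*R ≤ (v i₀ : ℝ) := hlow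
        _ ≤ |(v i₀ : ℝ)| := le_abs_self _
        _ ≤ latticeNorm κ v := coord_le_norm v i₀
    have hcondR : R ≤ latticeNorm κ v := by linarith
    have hmax : (maxAbs κ v : ℝ) ≤ ((3*n₀:ℕ):ℝ) := by
      have : maxAbs κ v ≤ 3*n₀ := by
        apply Finset.sup_le
        intro i _
        have h1 := (hco i).1
        have h2 := (hco i).2
        omega
      exact_mod_cast this
    have hnup : latticeNorm κ v ≤ B := by
      calc latticeNorm κ v ≤ Real.sqrt κ * maxAbs κ v := norm_le_sqrt_mul_maxAbs v
        _ ≤ Real.sqrt κ * ((3*n₀:ℕ):ℝ) := by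
            apply mul_le_mul_of_nonneg_left hmax hsκ.le
        _ ≤ Real.sqrt κ * (6*R) := by
            apply mul_le_mul_of_nonneg_left _ hsκ.le
            push_cast
            linarith
        _ = B := by rw [hB]; ring
    have hnpos : 0 < latticeNorm κ v := by linarith
    rw [latticeTerm, if_pos hcondR]
    have h1 : B ^ (-(2*δ)) ≤ latticeNorm κ v ^ (-(2*δ)) :=
      Real.rpow_le_rpow_of_nonpos hnpos hnup (by linarith)
    have h2 : Real.log 2 ≤ Real.log (latticeNorm κ v / R) := by
      apply Real.log_le_log (by norm_num)
      rw [le_div_iff₀ hR0]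
      linarith
    have hlog2 : (0:ℝ) ≤ Real.log 2 := Real.log_nonneg (by norm_num)
    exact mul_le_mul h1 h2 hlog2 (Real.rpow_nonneg hnpos.le _)
  have hcard : T.card = (n₀+1)^κ := by
    rw [hT, Fintype.card_piFinset]
    have : ∀ _i : Fin κ, (Finset.Icc ((2*n₀ : ℕ):ℤ) ((3*n₀ : ℕ):ℤ)).card = n₀+1 := by
      intro i
      rw [Int.card_Icc]
      omega
    rw [Finset.prod_congr rfl (fun i _ => this i), Finset.prod_const,
      Finset.card_univ, Fintype.card_fin]
  have hsum : (T.card : ℝ) * (B ^ (-(2*δ)) * Real.log 2) ≤ ∑ v ∈ T, latticeTerm κ δ R v := by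
    have := Finset.card_nsmul_le_sum T (latticeTerm κ δ R) (B ^ (-(2*δ)) * Real.log 2) key
    rwa [nsmul_eq_mul] at this
  have hcardR : R ^ ((κ:ℝ)) ≤ (T.card : ℝ) := by
    rw [hcard]
    push_cast
    rw [← Real.rpow_natCast ((n₀:ℝ)+1) κ]
    apply Real.rpow_le_rpow hR0.le (by linarith) (Nat.cast_nonneg κ)
  have hBsplit : B ^ (-(2*δ)) = (6*Real.sqrt κ) ^ (-(2*δ)) * R ^ (-(2*δ)) := by
    rw [hB, show (6:ℝ)*Real.sqrt κ * R = (6*Real.sqrt κ) * R by ring,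
      Real.mul_rpow (by positivity) hR0.le]
  calc ((6*Real.sqrt κ) ^ (-(2*δ)) * Real.log 2) * R ^ ((κ:ℝ)-2*δ)
      = R ^ ((κ:ℝ)) * ((6*Real.sqrt κ) ^ (-(2*δ)) * R ^ (-(2*δ)) * Real.log 2) := by
        rw [show (κ:ℝ)-2*δ = (κ:ℝ) + (-(2*δ)) by ring, Real.rpow_add hR0]
        ring
    _ ≤ (T.card : ℝ) * ((6*Real.sqrt κ) ^ (-(2*δ)) * R ^ (-(2*δ)) * Real.log 2) := by
        apply mul_le_mul_of_nonneg_right hcardR (by positivity)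
    _ = (T.card : ℝ) * (B ^ (-(2*δ)) * Real.log 2) := by rw [hBsplit]
    _ ≤ _ := hsum

end LatticeAux

/-- (Lattice sum estimate from the proof of Proposition 5.5.)
Let `κ ≥ 1` be an integer and `δ` a real number with `2δ > κ`. Then for every
`R ≥ 1` the series `Σ_{v ∈ ℤ^κ, ‖v‖ ≥ R} ‖v‖^{−2δ} log(‖v‖/R)` converges, and
there are constants `c₁, c₂ > 0` (depending only on `κ` and `δ`) such that for
every `R ≥ 1`:
`c₁ R^{κ−2δ} ≤ Σ_{v ∈ ℤ^κ, ‖v‖ ≥ R} ‖v‖^{−2δ} log(‖v‖/R) ≤ c₂ R^{κ−2δ}`. -/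
theorem lattice_sum_estimate (κ : ℕ) (hκ : 1 ≤ κ) (δ : ℝ) (hδ : (κ : ℝ) < 2 * δ) :
    (∀ R : ℝ, 1 ≤ R → Summable (latticeTerm κ δ R)) ∧
    ∃ c₁ : ℝ, 0 < c₁ ∧ ∃ c₂ : ℝ, 0 < c₂ ∧
      ∀ R : ℝ, 1 ≤ R →
        c₁ * R ^ ((κ : ℝ) - 2 * δ) ≤ (∑' v : Fin κ → ℤ, latticeTerm κ δ R v) ∧
        (∑' v : Fin κ → ℤ, latticeTerm κ δ R v) ≤ c₂ * R ^ ((κ : ℝ) - 2 * δ) := by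
  classical
  set ε : ℝ := (2*δ - κ)/4 with hε'
  set t : ℝ := (2*δ - κ)/2 with ht'
  have hε : 0 < ε := by rw [hε']; linarith
  have ht : 0 < t := by rw [ht']; linarith
  have heq : 2*δ = 2*ε + ((κ:ℝ) + t) := by rw [hε', ht']; ring
  set c₂ : ℝ := (1/ε) * ((2*κ*3^(κ-1) : ℕ) : ℝ) * ((1 + 1/t) * (Real.sqrt κ) ^ t) with hc₂'
  have hκ0 : 0 < (2*κ*3^(κ-1) : ℕ) := by positivity
  have hκ0R : (0:ℝ) < ((2*κ*3^(κ-1) : ℕ) : ℝ) := by exact_mod_cast hκ0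
  have hκR : (1:ℝ) ≤ (κ:ℝ) := by exact_mod_cast hκ
  have hsκ : (0:ℝ) < Real.sqrt κ := Real.sqrt_pos.2 (by linarith)
  have hc₂ : 0 < c₂ := by rw [hc₂']; positivity
  have master : ∀ R : ℝ, 1 ≤ R → ∀ s : Finset (Fin κ → ℤ),
      ∑ v ∈ s, latticeTerm κ δ R v ≤ c₂ * R ^ ((κ:ℝ) - 2*δ) := by
    intro R hR s
    have hR0 : (0:ℝ) < R := by linarith
    calc ∑ v ∈ s, latticeTerm κ δ R v
        ≤ ∑ v ∈ s, (1/ε) * R ^ (-(2*ε)) * LatticeAux.gfun κ t R (LatticeAux.maxAbs κ v) :=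
          Finset.sum_le_sum fun v _ => LatticeAux.pointwise_bound hκ hε ht heq hR v
      _ = (1/ε) * R ^ (-(2*ε)) *
            ∑ v ∈ s, LatticeAux.gfun κ t R (LatticeAux.maxAbs κ v) := by
          rw [← Finset.mul_sum]
      _ ≤ (1/ε) * R ^ (-(2*ε)) *
            (((2*κ*3^(κ-1) : ℕ) : ℝ) * ((1 + 1/t) * (Real.sqrt κ) ^ t * R ^ (-t))) := by
          apply mul_le_mul_of_nonneg_left (LatticeAux.gfun_sum_bound hκ ht hR s) (by positivity)
      _ = c₂ * (R ^ (-(2*ε)) * R ^ (-t)) := by rw [hc₂']; ring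
      _ = c₂ * R ^ ((κ:ℝ) - 2*δ) := by
          rw [← Real.rpow_add hR0]
          congr 2
          linarith
  have hsummable : ∀ R : ℝ, 1 ≤ R → Summable (latticeTerm κ δ R) := by
    intro R hR
    exact summable_of_sum_le (fun v => LatticeAux.latticeTerm_nonneg κ δ R hR v) (master R hR)
  refine ⟨hsummable, (6*Real.sqrt κ) ^ (-(2*δ)) * Real.log 2, ?_, c₂, hc₂, fun R hR => ⟨?_, ?_⟩⟩
  · have h1 : (0:ℝ) < (6*Real.sqrt κ) ^ (-(2*δ)) := Real.rpow_pos_of_pos (by positivity) _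
    have h2 : (0:ℝ) < Real.log 2 := Real.log_pos (by norm_num)
    positivity
  · obtain ⟨T, hT⟩ := LatticeAux.lower_sum hκ hδ hR
    exact hT.trans (Summable.sum_le_tsum T (fun v _ => LatticeAux.latticeTerm_nonneg κ δ R hR v)
      (hsummable R hR))
  · exact Summable.tsum_le_of_sum_le (hsummable R hR) (master R hR)
end
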